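/- Fix reals L1 < L2 and let a : ℝ → ℝ be Lipschitz continuous and attain its maximum over [L1,L2] at an interior point of (L1,L2). If ∫_{−∞}^{L1−L2} J(z) dz > 0 (equivalently, by symmetry, ∫_{L2−L1}^{+∞} J(z) dz > 0), then λ_p((L1,L2), d, a) → −∞ as d → +∞: for every M > 0 there exists D > 0 such that d > D implies λ_p((L1,L2), d, a) < −M. -/

import Mathlib

/-! Testing the eigenvalue problem with the constant function `φ ≡ 1` gives, at every
`x ∈ (L1, L2)`, the bound `d (∫_{x-L2}^{x-L1} J - 1) + a x`. The window `(x - L2, x - L1)` lies to the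
right of `L1 - L2`, so `∫_{x-L2}^{x-L1} J ≤ 1 - c` with `c = ∫_{-∞}^{L1-L2} J > 0`; hence
`λ_p ≤ max a - c d`, which tends to `-∞`. -/

open MeasureTheory Set Filter Topology

noncomputable section

def KernelJ (J : ℝ → ℝ) : Prop :=
  Continuous J ∧ (∀ x, 0 ≤ J x) ∧ (∃ C, ∀ x, J x ≤ C) ∧
    (∀ x, J (-x) = J x) ∧ 0 < J 0 ∧ (∫ x : ℝ, J x) = 1

/-- The generalized principal eigenvalue of the nonlocal operator
`d∫_{L1}^{L2} J(x-y)φ(y)dy - dφ(x) + a(x)φ(x)` on `(L1, L2)`. -/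
def lambdaP (J : ℝ → ℝ) (L1 L2 d : ℝ) (a : ℝ → ℝ) : ℝ :=
  sInf {lam : ℝ | ∃ φ : ℝ → ℝ, ContinuousOn φ (Icc L1 L2) ∧
    (∀ x ∈ Icc L1 L2, 0 < φ x) ∧
    ∀ x ∈ Ioo L1 L2,
      d * (∫ y in L1..L2, J (x - y) * φ y) - d * φ x + a x * φ x ≤ lam * φ x}

open intervalIntegral

def lambdaPAdmissible (J : ℝ → ℝ) (L1 L2 d : ℝ) (a : ℝ → ℝ) : Set ℝ :=
  {lam : ℝ | ∃ φ : ℝ → ℝ, ContinuousOn φ (Icc L1 L2) ∧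
    (∀ x ∈ Icc L1 L2, 0 < φ x) ∧
    ∀ x ∈ Ioo L1 L2,
      d * (∫ y in L1..L2, J (x - y) * φ y) - d * φ x + a x * φ x ≤ lam * φ x}

theorem lambdaP_eq_sInf (J : ℝ → ℝ) (L1 L2 d : ℝ) (a : ℝ → ℝ) :
    lambdaP J L1 L2 d a = sInf (lambdaPAdmissible J L1 L2 d a) := rfl

theorem KernelJ.integrable {J : ℝ → ℝ} (hJ : KernelJ J) : Integrable J := by
  obtain ⟨-, -, -, -, -, hJ1⟩ := hJ
  by_contra h
  rw [integral_undef h] at hJ1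
  exact zero_ne_one hJ1

section

variable {J : ℝ → ℝ} {L1 L2 d : ℝ} {a : ℝ → ℝ}

theorem bddBelow_lambdaPAdmissible (hJ : ∀ x, 0 ≤ J x) (hd : 0 ≤ d) {x0 : ℝ}
    (hx0 : x0 ∈ Ioo L1 L2) : BddBelow (lambdaPAdmissible J L1 L2 d a) := by
  refine ⟨a x0 - d, ?_⟩
  rintro lam ⟨φ, -, hφpos, hφ⟩
  have hpos := hφpos x0 (Ioo_subset_Icc_self hx0)
  have hconv : 0 ≤ ∫ y in L1..L2, J (x0 - y) * φ y :=
    integral_nonneg (hx0.1.trans hx0.2).le fun y hy => mul_nonneg (hJ _) (hφpos y hy).le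
  have hineq := hφ x0 hx0
  refine le_of_mul_le_mul_right (?_ : (a x0 - d) * φ x0 ≤ lam * φ x0) hpos
  nlinarith

theorem lambdaP_le_of_mem_lambdaPAdmissible (hJ : ∀ x, 0 ≤ J x) (hd : 0 ≤ d) {x0 : ℝ}
    (hx0 : x0 ∈ Ioo L1 L2) {lam : ℝ} (h : lam ∈ lambdaPAdmissible J L1 L2 d a) :
    lambdaP J L1 L2 d a ≤ lam := by
  rw [lambdaP_eq_sInf]
  exact csInf_le (bddBelow_lambdaPAdmissible hJ hd hx0) h

theorem integral_comp_sub_add_integral_Iio_le (hJ : ∀ x, 0 ≤ J x) (hJi : Integrable J)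
    {x : ℝ} (hx : x ∈ Icc L1 L2) :
    (∫ y in L1..L2, J (x - y)) + ∫ z in Iio (L1 - L2), J z ≤ ∫ z, J z := by
  have hwindow : (∫ y in L1..L2, J (x - y)) ≤ ∫ z in Ici (L1 - L2), J z := by
    rw [integral_comp_sub_left J x, integral_of_le (by linarith [hx.1, hx.2])]
    refine setIntegral_mono_set hJi.integrableOn (.of_forall hJ) (.of_forall fun z hz => ?_)
    exact show L1 - L2 ≤ z by linarith [hx.1, hz.1]
  have hsplit := integral_Iio_add_Ici (b := L1 - L2) hJi.integrableOn hJi.integrableOn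
  linarith

theorem lambdaP_le_sub_mul_integral_Iio (hJ : KernelJ J) (hd : 0 ≤ d) {x0 : ℝ}
    (hx0 : x0 ∈ Ioo L1 L2) (hmax : ∀ x ∈ Ioo L1 L2, a x ≤ a x0) :
    lambdaP J L1 L2 d a ≤ a x0 - d * ∫ z in Iio (L1 - L2), J z := by
  have hJi := hJ.integrable
  obtain ⟨-, hJnn, -, -, -, hJ1⟩ := hJ
  refine lambdaP_le_of_mem_lambdaPAdmissible hJnn hd hx0
    ⟨fun _ => 1, continuousOn_const, fun _ _ => one_pos, fun x hx => ?_⟩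
  have hwindow := integral_comp_sub_add_integral_Iio_le hJnn hJi (Ioo_subset_Icc_self hx)
  rw [hJ1] at hwindow
  have := mul_le_mul_of_nonneg_left hwindow hd
  simp only [mul_one]
  linarith [hmax x hx]

end

theorem lambdaP_limit_d_infty_general
    (J : ℝ → ℝ) (L1 L2 : ℝ) (a : ℝ → ℝ)
    (hJ : KernelJ J)
    (haH : ∃ x0 ∈ Ioo L1 L2, ∀ x ∈ Icc L1 L2, a x ≤ a x0)
    (hJtail : 0 < ∫ z in Iio (L1 - L2), J z) :
    ∀ M > (0:ℝ), ∃ D > (0:ℝ), ∀ d : ℝ, D < d → lambdaP J L1 L2 d a < -M := by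
  obtain ⟨x0, hx0, hmax⟩ := haH
  set c := ∫ z in Iio (L1 - L2), J z
  intro M _
  refine ⟨max 1 ((M + a x0) / c), by positivity, fun d hd => ?_⟩
  have hd0 : 0 ≤ d := by linarith [le_max_left 1 ((M + a x0) / c)]
  have hlarge : M + a x0 < d * c := (div_lt_iff₀ hJtail).1 ((le_max_right _ _).trans_lt hd)
  have := lambdaP_le_sub_mul_integral_Iio hJ hd0 hx0 fun x hx => hmax x (Ioo_subset_Icc_self hx)
  linarith

/-- Theorem 3.4 (iii): if `∫_{-∞}^{L1-L2} J(z) dz > 0`, then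
`λ_p((L1,L2), d, a) → -∞` as `d → +∞`. -/
theorem lambdaP_limit_d_infty
    (J : ℝ → ℝ) (L1 L2 : ℝ) (a : ℝ → ℝ)
    (hJ : KernelJ J) (hL : L1 < L2)
    (haL : ∃ K, LipschitzWith K a)
    (haH : ∃ x0 ∈ Ioo L1 L2, ∀ x ∈ Icc L1 L2, a x ≤ a x0)
    (hJtail : 0 < ∫ z in Iio (L1 - L2), J z) :
    ∀ M > (0:ℝ), ∃ D > (0:ℝ), ∀ d : ℝ, D < d → lambdaP J L1 L2 d a < -M :=
  lambdaP_limit_d_infty_general J L1 L2 a hJ haH hJtail
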